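/- arXiv:2312.16505 — 2 statements merged into one kernel-verified Lean document; each statement's English description precedes it below -/
import Mathlib

section
/- Let 𝒜 = ℳ - 𝒩 be an H-splitting of a square complex matrix 𝒜 of size n×n. Then ℳ is invertible and ρ(|I - ℳ⁻¹𝒜|) < 1. -/
open Matrix

/-- Spectral radius of a real square matrix: the supremum of the moduli of its
complex eigenvalues. -/
noncomputable def specRad {m : Type*} [Fintype m] [DecidableEq m]
    (A : Matrix m m ℝ) : ℝ :=
  sSup ((fun z : ℂ => ‖z‖) '' spectrum ℂ (A.map Complex.ofReal))

/-- Entrywise absolute value (modulus) of a complex matrix. -/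
noncomputable def cabs {m l : Type*} (A : Matrix m l ℂ) : Matrix m l ℝ :=
  fun i j => ‖A i j‖

/-- Comparison matrix of a complex square matrix. -/
noncomputable def compMat {m : Type*} [DecidableEq m]
    (A : Matrix m m ℂ) : Matrix m m ℝ :=
  fun i j => if i = j then ‖A i j‖ else -‖A i j‖

/-- M-matrix: there is `α` with `α I - A ≥ 0` entrywise and `α > ρ(α I - A)`. -/
def IsMMat {m : Type*} [Fintype m] [DecidableEq m]
    (A : Matrix m m ℝ) : Prop :=
  ∃ α : ℝ, (∀ i j, 0 ≤ (α • (1 : Matrix m m ℝ) - A) i j) ∧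
    specRad (α • (1 : Matrix m m ℝ) - A) < α

/-! Since `⟨M⟩ - |N|` is an M-matrix, Gelfand's formula makes the Neumann series of
`α⁻¹ (α I - (⟨M⟩ - |N|))` converge, and summing it against the all-ones vector gives `x > 0`
with `|N| x < ⟨M⟩ x`. Then `M * diag x` is strictly diagonally dominant, so `M` is invertible by
Gershgorin. In the weighted max-norm `max_i |u_i| / x_i`, the inequality `|M u| < ⟨M⟩ x` forces
`|u| < x`. Applied to `u = M⁻¹ N d`, with `|d| ≤ x` and the phases of `d` chosen so that
`u_i = (|M⁻¹ N| x)_i`, this gives `|M⁻¹ N| x < x`; and a nonnegative matrix that strictly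
shrinks a positive vector has spectral radius `< 1`. -/

open Finset Filter

section SpectralRadius

variable {ι : Type*} [Fintype ι] [DecidableEq ι]

lemma specRad_nonneg (A : Matrix ι ι ℝ) : 0 ≤ specRad A :=
  Real.sSup_nonneg (by rintro r ⟨z, -, rfl⟩; exact norm_nonneg z)

lemma norm_le_specRad {A : Matrix ι ι ℝ} {z : ℂ} (hz : z ∈ spectrum ℂ (A.map Complex.ofReal)) :
    ‖z‖ ≤ specRad A :=
  le_csSup ((A.map Complex.ofReal).finite_spectrum.image _).bddAbove ⟨z, hz, rfl⟩

lemma specRad_lt_of_forall_norm_lt {A : Matrix ι ι ℝ} {r : ℝ} (hr : 0 < r)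
    (h : ∀ z ∈ spectrum ℂ (A.map Complex.ofReal), ‖z‖ < r) : specRad A < r := by
  rcases ((fun z : ℂ => ‖z‖) '' spectrum ℂ (A.map Complex.ofReal)).eq_empty_or_nonempty
    with he | hne
  · rwa [specRad, he, Real.sSup_empty]
  · obtain ⟨z, hz, hzr⟩ := hne.csSup_mem ((A.map Complex.ofReal).finite_spectrum.image _)
    rw [specRad, ← hzr]
    exact h z hz

lemma spectralRadius_map_ofReal_le (A : Matrix ι ι ℝ) :
    spectralRadius ℂ (A.map Complex.ofReal) ≤ ENNReal.ofReal (specRad A) :=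
  iSup₂_le fun z hz => by
    rw [← enorm_eq_nnnorm, ← ofReal_norm]
    exact ENNReal.ofReal_le_ofReal (norm_le_specRad hz)

lemma exists_mulVec_eq_smul_of_mem_spectrum {K : Type*} [Field K] {A : Matrix ι ι K} {z : K}
    (hz : z ∈ spectrum K A) : ∃ v : ι → K, v ≠ 0 ∧ A *ᵥ v = z • v := by
  rw [← Matrix.spectrum_toLin', ← Module.End.hasEigenvalue_iff_mem_spectrum] at hz
  obtain ⟨v, hv⟩ := hz.exists_hasEigenvector
  exact ⟨v, hv.2, by simpa using hv.apply_eq_smul⟩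

end SpectralRadius

section Nonneg

variable {ι κ : Type*} [Fintype κ]

lemma mulVec_apply_nonneg {Q : Matrix ι κ ℝ} (hQ : ∀ i j, 0 ≤ Q i j) {x : κ → ℝ}
    (hx : ∀ j, 0 ≤ x j) (i : ι) : 0 ≤ (Q *ᵥ x) i :=
  sum_nonneg fun j _ => mul_nonneg (hQ i j) (hx j)

lemma exists_pos_mulVec_lt_of_summable_pow [DecidableEq κ] {Q : Matrix κ κ ℝ}
    (hQ : ∀ i j, 0 ≤ Q i j) (hs : Summable fun n : ℕ => Q ^ n) :
    ∃ x : κ → ℝ, (∀ i, 0 < x i) ∧ ∀ i, (Q *ᵥ x) i < x i := by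
  set S := ∑' n : ℕ, Q ^ n
  have hS : HasSum (fun n : ℕ => Q ^ n) S := hs.hasSum
  have hQS : Q * S = S - 1 := by
    have h := (hasSum_nat_add_iff' 1).mpr hS
    simp only [pow_succ', range_one, sum_singleton, pow_zero] at h
    exact (hS.mul_left Q).unique h
  have hS0 : ∀ i j, 0 ≤ S i j := fun i j =>
    (Pi.hasSum.mp (Pi.hasSum.mp hS i) j).nonneg fun n => pow_apply_nonneg hQ n i j
  set x := S *ᵥ fun _ => 1
  have hQx : ∀ i, (Q *ᵥ x) i = x i - 1 := fun i => by
    simp [x, mulVec_mulVec, hQS, sub_mulVec]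
  have hQx0 := mulVec_apply_nonneg hQ (mulVec_apply_nonneg hS0 fun _ => zero_le_one)
  exact ⟨x, fun i => by linarith [hQx i, hQx0 i], fun i => by linarith [hQx i]⟩

end Nonneg

lemma eventually_norm_pow_le_of_spectralRadius_lt {A : Type*} [NormedRing A] [NormedAlgebra ℂ A]
    [CompleteSpace A] {a : A} {t : ℝ} (ht : spectralRadius ℂ a < ENNReal.ofReal t) :
    ∀ᶠ n : ℕ in atTop, ‖a ^ n‖ ≤ t ^ n := by
  have ht0 : 0 < t := ENNReal.ofReal_pos.mp (pos_of_gt ht)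
  filter_upwards
    [(spectrum.pow_norm_pow_one_div_tendsto_nhds_spectralRadius a).eventually_lt_const ht,
      eventually_ne_atTop 0] with n hn hn0
  rw [ENNReal.ofReal_lt_ofReal_iff ht0, one_div] at hn
  calc ‖a ^ n‖ = (‖a ^ n‖ ^ (n⁻¹ : ℝ)) ^ n :=
        (Real.rpow_inv_natCast_pow (norm_nonneg _) hn0).symm
    _ ≤ t ^ n := pow_le_pow_left₀ (by positivity) hn.le n

section NeumannSeries

attribute [local instance] Matrix.linftyOpNormedAddCommGroup Matrix.linftyOpNormedRing
  Matrix.linftyOpNormedAlgebra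

variable {ι : Type*} [Fintype ι] [DecidableEq ι]

lemma norm_map_ofReal (A : Matrix ι ι ℝ) : ‖A.map Complex.ofReal‖ = ‖A‖ := by
  simp [Matrix.linfty_opNorm_def]

lemma eventually_norm_pow_le_of_specRad_lt {A : Matrix ι ι ℝ} {t : ℝ} (ht : specRad A < t) :
    ∀ᶠ n : ℕ in atTop, ‖A ^ n‖ ≤ t ^ n := by
  have hρ : spectralRadius ℂ (A.map Complex.ofReal) < ENNReal.ofReal t :=
    (spectralRadius_map_ofReal_le A).trans_lt
      ((ENNReal.ofReal_lt_ofReal_iff ((specRad_nonneg A).trans_lt ht)).mpr ht)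
  filter_upwards [eventually_norm_pow_le_of_spectralRadius_lt hρ] with n hn
  rwa [← norm_map_ofReal, show Complex.ofReal = Complex.ofRealHom from rfl, Matrix.map_pow]

theorem IsMMat.exists_pos_mulVec_pos {C : Matrix ι ι ℝ} (hC : IsMMat C) :
    ∃ x : ι → ℝ, (∀ i, 0 < x i) ∧ ∀ i, 0 < (C *ᵥ x) i := by
  obtain ⟨α, hP, hρ⟩ := hC
  set P := α • (1 : Matrix ι ι ℝ) - C
  have hα : 0 < α := (specRad_nonneg P).trans_lt hρ
  obtain ⟨t, hPt, htα⟩ := exists_between hρ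
  have ht : 0 ≤ t := (specRad_nonneg P).trans hPt.le
  have hs : Summable fun n : ℕ => (α⁻¹ • P) ^ n := by
    refine (summable_geometric_of_lt_one (div_nonneg ht hα.le) ((div_lt_one hα).mpr htα))
      |>.of_norm_bounded_eventually_nat ?_
    filter_upwards [eventually_norm_pow_le_of_specRad_lt hPt] with n hn
    rw [smul_pow, norm_smul, norm_pow, norm_inv, Real.norm_of_nonneg hα.le, div_pow,
      div_eq_inv_mul, inv_pow]
    exact mul_le_mul_of_nonneg_left hn (by positivity)
  obtain ⟨x, hx, hQx⟩ :=
    exists_pos_mulVec_lt_of_summable_pow (Q := α⁻¹ • P)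
      (fun i j => mul_nonneg (inv_nonneg.mpr hα.le) (hP i j)) hs
  refine ⟨x, hx, fun i => ?_⟩
  have hC : C = α • (1 - α⁻¹ • P) := by
    rw [smul_sub, smul_inv_smul₀ hα.ne', sub_sub_cancel]
  rw [hC, smul_mulVec, sub_mulVec, one_mulVec]
  exact mul_pos hα (sub_pos.mpr (hQx i))

end NeumannSeries

lemma exists_norm_le_mul_and_norm_eq_mul {ι E : Type*} [Fintype ι] [Nonempty ι]
    [SeminormedAddGroup E] (v : ι → E) {x : ι → ℝ} (hx : ∀ i, 0 < x i) :
    ∃ k c, (∀ j, ‖v j‖ ≤ c * x j) ∧ ‖v k‖ = c * x k := by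
  obtain ⟨k, -, hk⟩ := exists_max_image univ (fun j => ‖v j‖ / x j) univ_nonempty
  exact ⟨k, ‖v k‖ / x k, fun j => (div_le_iff₀ (hx j)).mp (hk j (mem_univ j)),
    (div_mul_cancel₀ _ (hx k).ne').symm⟩

lemma norm_mulVec_le_cabs_mulVec {ι κ : Type*} [Fintype κ] (N : Matrix ι κ ℂ) {d : κ → ℂ}
    {x : κ → ℝ} (hd : ∀ j, ‖d j‖ ≤ x j) (i : ι) : ‖(N *ᵥ d) i‖ ≤ (cabs N *ᵥ x) i :=
  (norm_sum_le _ _).trans <| sum_le_sum fun j _ => by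
    rw [norm_mul]
    exact mul_le_mul_of_nonneg_left (hd j) (norm_nonneg _)

section Comparison

variable {ι : Type*} [Fintype ι] [DecidableEq ι]

lemma compMat_mulVec_apply (M : Matrix ι ι ℂ) (x : ι → ℝ) (i : ι) :
    (compMat M *ᵥ x) i = ‖M i i‖ * x i - ∑ j ∈ univ.erase i, ‖M i j‖ * x j := by
  rw [mulVec, dotProduct, ← add_sum_erase _ _ (mem_univ i), sub_eq_add_neg, ← sum_neg_distrib]
  congr 1
  · simp [compMat]
  · refine sum_congr rfl fun j hj => ?_
    simp [compMat, Ne.symm (ne_of_mem_erase hj)]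

lemma mul_compMat_mulVec_le_norm_mulVec (M : Matrix ι ι ℂ) {u : ι → ℂ} {x : ι → ℝ} {c : ℝ}
    {k : ι} (hle : ∀ j, ‖u j‖ ≤ c * x j) (heq : ‖u k‖ = c * x k) :
    c * (compMat M *ᵥ x) k ≤ ‖(M *ᵥ u) k‖ := by
  have hoff : ‖∑ j ∈ univ.erase k, M k j * u j‖ ≤ c * ∑ j ∈ univ.erase k, ‖M k j‖ * x j :=
    (norm_sum_le _ _).trans <| by
      rw [mul_sum]
      refine sum_le_sum fun j _ => ?_
      rw [norm_mul, mul_left_comm]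
      exact mul_le_mul_of_nonneg_left (hle j) (norm_nonneg _)
  calc c * (compMat M *ᵥ x) k
      = ‖M k k * u k‖ - c * ∑ j ∈ univ.erase k, ‖M k j‖ * x j := by
        rw [compMat_mulVec_apply, norm_mul, heq]; ring
    _ ≤ ‖M k k * u k‖ - ‖∑ j ∈ univ.erase k, M k j * u j‖ := by gcongr
    _ ≤ ‖M k k * u k + ∑ j ∈ univ.erase k, M k j * u j‖ := norm_sub_le_norm_add _ _
    _ = ‖(M *ᵥ u) k‖ := by rw [mulVec, dotProduct, ← add_sum_erase _ _ (mem_univ k)]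

lemma norm_lt_of_norm_mulVec_lt_compMat_mulVec {M : Matrix ι ι ℂ} {x : ι → ℝ}
    (hx : ∀ i, 0 < x i) {u : ι → ℂ} (hu : ∀ i, ‖(M *ᵥ u) i‖ < (compMat M *ᵥ x) i) (i : ι) :
    ‖u i‖ < x i := by
  have : Nonempty ι := ⟨i⟩
  obtain ⟨k, c, hle, heq⟩ := exists_norm_le_mul_and_norm_eq_mul u hx
  have hc : c < 1 := by
    by_contra! hc
    have hpos := (norm_nonneg _).trans_lt (hu k)
    exact (hu k).not_ge
      ((le_mul_of_one_le_left hpos.le hc).trans (mul_compMat_mulVec_le_norm_mulVec M hle heq))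
  calc ‖u i‖ ≤ c * x i := hle i
    _ < x i := mul_lt_of_lt_one_left (hx i) hc

lemma isUnit_of_compMat_mulVec_pos {M : Matrix ι ι ℂ} {x : ι → ℝ} (hx : ∀ i, 0 < x i)
    (h : ∀ i, 0 < (compMat M *ᵥ x) i) : IsUnit M := by
  have hdom : ∀ k, ∑ j ∈ univ.erase k, ‖(M * diagonal (fun j => (x j : ℂ))) k j‖
      < ‖(M * diagonal (fun j => (x j : ℂ))) k k‖ := fun k => by
    have hk := h k
    simp only [mul_diagonal, norm_mul, Complex.norm_real, Real.norm_of_nonneg (hx _).le]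
    rw [compMat_mulVec_apply] at hk
    linarith
  have hdet := det_ne_zero_of_sum_row_lt_diag hdom
  rw [det_mul] at hdet
  exact (isUnit_iff_isUnit_det M).mpr (isUnit_iff_ne_zero.mpr (left_ne_zero_of_mul hdet))

end Comparison

lemma exists_dotProduct_eq_sum_norm_mul {ι 𝕜 : Type*} [Fintype ι] [RCLike 𝕜] (r : ι → 𝕜)
    {x : ι → ℝ} (hx : ∀ j, 0 ≤ x j) :
    ∃ d : ι → 𝕜, (∀ j, ‖d j‖ ≤ x j) ∧ r ⬝ᵥ d = ((∑ j, ‖r j‖ * x j : ℝ) : 𝕜) := by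
  refine ⟨fun j => (x j : 𝕜) * (starRingEnd 𝕜 (r j) / ‖r j‖), fun j => ?_, ?_⟩
  · rw [norm_mul, RCLike.norm_ofReal, abs_of_nonneg (hx j), norm_div, RCLike.norm_conj,
      RCLike.norm_ofReal, abs_norm]
    exact mul_le_of_le_one_right (hx j) (div_self_le_one _)
  · push_cast
    refine sum_congr rfl fun j _ => ?_
    rw [mul_left_comm, ← mul_div_assoc, RCLike.mul_conj, sq, mul_self_div_self, mul_comm]

lemma cabs_map_ofReal {ι κ : Type*} {B : Matrix ι κ ℝ} (hB : ∀ i j, 0 ≤ B i j) :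
    cabs (B.map Complex.ofReal) = B := by
  ext i j
  simp [cabs, abs_of_nonneg (hB i j)]

lemma specRad_lt_one_of_mulVec_lt {ι : Type*} [Fintype ι] [DecidableEq ι] {B : Matrix ι ι ℝ}
    (hB : ∀ i j, 0 ≤ B i j) {x : ι → ℝ} (hx : ∀ i, 0 < x i) (hBx : ∀ i, (B *ᵥ x) i < x i) :
    specRad B < 1 := by
  refine specRad_lt_of_forall_norm_lt one_pos fun z hz => ?_
  obtain ⟨v, hv0, hv⟩ := exists_mulVec_eq_smul_of_mem_spectrum hz
  obtain ⟨k₀, hk₀⟩ := Function.ne_iff.mp hv0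
  have : Nonempty ι := ⟨k₀⟩
  obtain ⟨k, c, hle, heq⟩ := exists_norm_le_mul_and_norm_eq_mul v hx
  have hc : 0 < c := pos_of_mul_pos_left ((norm_pos_iff.mpr hk₀).trans_le (hle k₀)) (hx k₀).le
  have hbound : ‖z‖ * (c * x k) ≤ c * (B *ᵥ x) k := by
    have h := norm_mulVec_le_cabs_mulVec (B.map Complex.ofReal) (x := c • x) hle k
    rw [hv, cabs_map_ofReal hB, mulVec_smul, Pi.smul_apply, Pi.smul_apply, smul_eq_mul,
      norm_mul, heq] at h
    exact h
  by_contra! hz1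
  exact (mul_lt_mul_of_pos_left (hBx k) hc).not_ge
    ((le_mul_of_one_le_left (mul_pos hc (hx k)).le hz1).trans hbound)

lemma cabs_inv_mul_mulVec_lt {ι : Type*} [Fintype ι] [DecidableEq ι] {M N : Matrix ι ι ℂ}
    (hM : IsUnit M) {x : ι → ℝ} (hx : ∀ i, 0 < x i)
    (hdom : ∀ i, (cabs N *ᵥ x) i < (compMat M *ᵥ x) i) (i : ι) :
    (cabs (M⁻¹ * N) *ᵥ x) i < x i := by
  obtain ⟨d, hd, hrow⟩ := exists_dotProduct_eq_sum_norm_mul ((M⁻¹ * N) i) fun j => (hx j).le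
  set u := M⁻¹ *ᵥ N *ᵥ d with hu
  have hMu : M *ᵥ u = N *ᵥ d := by
    rw [mulVec_mulVec, mul_nonsing_inv _ ((isUnit_iff_isUnit_det M).mp hM), one_mulVec]
  have hui : u i = ((cabs (M⁻¹ * N) *ᵥ x) i : ℂ) := by
    rw [hu, mulVec_mulVec]
    exact hrow
  calc (cabs (M⁻¹ * N) *ᵥ x) i ≤ ‖u i‖ := by
        rw [hui, Complex.norm_real]
        exact Real.le_norm_self _
    _ < x i := norm_lt_of_norm_mulVec_lt_compMat_mulVec hx
        (fun k => hMu ▸ (norm_mulVec_le_cabs_mulVec N hd k).trans_lt (hdom k)) i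

theorem stmt1 {n : ℕ} (A M N : Matrix (Fin n) (Fin n) ℂ)
    (hsplit : A = M - N) (hH : IsMMat (compMat M - cabs N)) :
    IsUnit M ∧ specRad (cabs (1 - M⁻¹ * A)) < 1 := by
  obtain ⟨x, hx, hCx⟩ := hH.exists_pos_mulVec_pos
  have hdom : ∀ i, (cabs N *ᵥ x) i < (compMat M *ᵥ x) i := fun i => by
    simpa [sub_mulVec] using hCx i
  have hM : IsUnit M := isUnit_of_compMat_mulVec_pos hx fun i =>
    (mulVec_apply_nonneg (fun _ _ => norm_nonneg _) (fun j => (hx j).le) i).trans_lt (hdom i)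
  have hAN : 1 - M⁻¹ * A = M⁻¹ * N := by
    rw [hsplit, Matrix.mul_sub, nonsing_inv_mul _ ((isUnit_iff_isUnit_det M).mp hM),
      sub_sub_cancel]
  refine ⟨hM, ?_⟩
  rw [hAN]
  exact specRad_lt_one_of_mulVec_lt (fun _ _ => norm_nonneg _) hx
    (cabs_inv_mul_mulVec_lt hM hx hdom)
end

section
/- Let A, M, F be complex n×n matrices with M and F invertible, and let Q be the 2n×2n block matrix Q = [[0, I - M⁻¹A], [I - F⁻¹A, 0]]. If ρ(|Q|) < 1, then ρ(|I - F⁻¹(M + F - A)M⁻¹A|) < 1. -/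
/-!
Write `B = I - M⁻¹A` and `C = I - F⁻¹A`; invertibility of `M` and `F` gives
`I - F⁻¹(M + F - A)M⁻¹A = CB`. If `CB x = z x` with `x ≠ 0`, then `y = |x|` satisfies
`|z| y ≤ |C||B| y`, so `u = (|B| y, √|z| y)` satisfies `√|z| u ≤ |Q| u` entrywise.
By the Collatz–Wielandt bound (for `W, u ≥ 0`, `u ≠ 0`, `t u ≤ W u` forces `t ≤ ρ(W)`,
since then `tᵏ u ≤ Wᵏ u` and Gelfand's formula applies) we get `√|z| ≤ ρ(|Q|)`,
hence `ρ(|CB|) ≤ ρ(|Q|)² < 1`.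
-/

open Matrix

open Filter Topology

theorem one_sub_mul_eq_mul_one_sub_of_mul_eq_one {R : Type*} [Ring R] {A M M' F F' : R}
    (hM : M * M' = 1) (hF : F' * F = 1) :
    1 - F' * (M + F - A) * (M' * A) = (1 - F' * A) * (1 - M' * A) := by
  have hMA : F' * M * (M' * A) = F' * A := by rw [mul_assoc, ← mul_assoc M, hM, one_mul]
  have hFA : F' * F * (M' * A) = M' * A := by rw [hF, one_mul]
  calc 1 - F' * (M + F - A) * (M' * A)
      = 1 - F' * M * (M' * A) - F' * F * (M' * A) + F' * A * (M' * A) := by noncomm_ring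
    _ = (1 - F' * A) * (1 - M' * A) := by rw [hMA, hFA]; noncomm_ring

theorem ofReal_le_spectralRadius_of_mul_pow_le_norm_pow {A : Type*} [NormedRing A]
    [NormedAlgebra ℂ A] [CompleteSpace A] (a : A) {c t : ℝ} (hc : 0 < c) (ht : 0 ≤ t)
    (h : ∀ k : ℕ, c * t ^ k ≤ ‖a ^ k‖) : ENNReal.ofReal t ≤ spectralRadius ℂ a := by
  have hroot : Tendsto (fun k : ℕ => c ^ (1 / (k : ℝ)) * t) atTop (𝓝 t) := by
    simpa using ((tendsto_const_nhds (x := c)).rpow tendsto_one_div_atTop_nhds_zero_nat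
      (Or.inl hc.ne')).mul_const t
  refine le_of_tendsto_of_tendsto (ENNReal.tendsto_ofReal hroot)
    (spectrum.pow_norm_pow_one_div_tendsto_nhds_spectralRadius a) ?_
  filter_upwards [eventually_ne_atTop 0] with k hk
  have hk_root : c ^ (1 / (k : ℝ)) * t = (c * t ^ k) ^ (1 / (k : ℝ)) := by
    rw [Real.mul_rpow hc.le (by positivity), one_div, Real.pow_rpow_inv_natCast ht hk]
  rw [hk_root]
  gcongr
  exact h k

namespace Matrix

variable {m : Type*}

lemma cabs_map_ofReal_cabs {l : Type*} (X : Matrix m l ℂ) :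
    cabs ((cabs X).map Complex.ofReal) = cabs X := by
  ext i j
  simp [cabs]

lemma cabs_fromBlocks (B C : Matrix m m ℂ) :
    cabs (fromBlocks 0 B C 0) = fromBlocks 0 (cabs B) (cabs C) 0 := by
  ext (i | i) (j | j) <;> simp [cabs]

variable [Fintype m]

lemma cabs_mul_le (C B : Matrix m m ℂ) (i j : m) :
    cabs (C * B) i j ≤ (cabs C * cabs B) i j := by
  simpa [cabs, mul_apply] using norm_sum_le Finset.univ fun k => C i k * B k j

lemma norm_smul_le_cabs_mulVec {X : Matrix m m ℂ} {x : m → ℂ} {z : ℂ} (h : X *ᵥ x = z • x) :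
    ‖z‖ • (‖x ·‖) ≤ cabs X *ᵥ (‖x ·‖) := fun i =>
  calc ‖z‖ * ‖x i‖ = ‖(X *ᵥ x) i‖ := by simp [h]
    _ ≤ (cabs X *ᵥ (‖x ·‖)) i := by
      simpa [cabs, mulVec, dotProduct] using norm_sum_le Finset.univ fun j => X i j * x j

lemma mulVec_mono_of_nonneg {W : Matrix m m ℝ} (hW : ∀ i j, 0 ≤ W i j) :
    Monotone (W *ᵥ ·) := fun _ _ huv i =>
  Finset.sum_le_sum fun j _ => mul_le_mul_of_nonneg_left (huv j) (hW i j)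

variable [DecidableEq m]

lemma exists_mulVec_eq_smul_of_mem_spectrum {K : Type*} [Field K] {X : Matrix m m K} {z : K}
    (hz : z ∈ spectrum K X) : ∃ x : m → K, x ≠ 0 ∧ X *ᵥ x = z • x := by
  rw [← spectrum_toLin', ← Module.End.hasEigenvalue_iff_mem_spectrum] at hz
  obtain ⟨x, hx⟩ := hz.exists_hasEigenvector
  exact ⟨x, hx.2, by simpa using hx.apply_eq_smul⟩

lemma pow_smul_le_pow_mulVec {W : Matrix m m ℝ} (hW : ∀ i j, 0 ≤ W i j) {y : m → ℝ}
    {t : ℝ} (ht : 0 ≤ t) (h : t • y ≤ W *ᵥ y) (k : ℕ) : t ^ k • y ≤ W ^ k *ᵥ y := by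
  induction k with
  | zero => simp
  | succ k ih =>
    calc t ^ (k + 1) • y = t ^ k • t • y := by rw [pow_succ, mul_smul]
      _ ≤ t ^ k • (W *ᵥ y) := smul_le_smul_of_nonneg_left h (pow_nonneg ht k)
      _ = W *ᵥ (t ^ k • y) := (mulVec_smul W _ y).symm
      _ ≤ W *ᵥ (W ^ k *ᵥ y) := mulVec_mono_of_nonneg hW ih
      _ = W ^ (k + 1) *ᵥ y := by rw [mulVec_mulVec, pow_succ']

lemma specRad_nonneg (W : Matrix m m ℝ) : 0 ≤ specRad W :=
  Real.sSup_nonneg (by rintro _ ⟨z, _, rfl⟩; exact norm_nonneg z)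

lemma norm_le_specRad {W : Matrix m m ℝ} {z : ℂ}
    (hz : z ∈ spectrum ℂ (W.map Complex.ofReal)) : ‖z‖ ≤ specRad W :=
  le_csSup ((finite_spectrum _).image _).bddAbove ⟨z, hz, rfl⟩

lemma specRad_le {W : Matrix m m ℝ} {r : ℝ} (hr : 0 ≤ r)
    (h : ∀ z ∈ spectrum ℂ (W.map Complex.ofReal), ‖z‖ ≤ r) : specRad W ≤ r :=
  Real.sSup_le (by rintro _ ⟨z, hz, rfl⟩; exact h z hz) hr

-- Any Banach algebra norm serves Gelfand's formula; the ∞-operator norm dominates coordinates.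
attribute [local instance] Matrix.linftyOpNormedRing Matrix.linftyOpNormedAlgebra in
lemma le_specRad_of_smul_le_mulVec {W : Matrix m m ℝ} (hW : ∀ i j, 0 ≤ W i j) {y : m → ℝ}
    (hy : 0 ≤ y) (hy0 : y ≠ 0) {t : ℝ} (ht : 0 ≤ t) (h : t • y ≤ W *ᵥ y) :
    t ≤ specRad W := by
  obtain ⟨i, hi⟩ := Function.ne_iff.mp hy0
  have hyi : 0 < y i := lt_of_le_of_ne (hy i) (Ne.symm hi)
  set yc : m → ℂ := Complex.ofRealHom ∘ y
  have hyc : 0 < ‖yc‖ := norm_pos_iff.mpr fun h0 => hi (by simpa [yc] using congrFun h0 i)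
  have hgrowth : ∀ k : ℕ, y i / ‖yc‖ * t ^ k ≤ ‖(W.map Complex.ofRealHom) ^ k‖ := by
    intro k
    rw [div_mul_eq_mul_div, div_le_iff₀ hyc]
    calc y i * t ^ k ≤ (W ^ k *ᵥ y) i := by
          simpa [mul_comm] using pow_smul_le_pow_mulVec hW ht h k i
      _ ≤ ‖Complex.ofRealHom ((W ^ k *ᵥ y) i)‖ := by simp [le_abs_self]
      _ = ‖((W.map Complex.ofRealHom) ^ k *ᵥ yc) i‖ := by
          rw [RingHom.map_mulVec, Matrix.map_pow]
      _ ≤ ‖(W.map Complex.ofRealHom) ^ k *ᵥ yc‖ := norm_le_pi_norm _ i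
      _ ≤ ‖(W.map Complex.ofRealHom) ^ k‖ * ‖yc‖ := linfty_opNorm_mulVec _ _
  have hlower := ofReal_le_spectralRadius_of_mul_pow_le_norm_pow _ (div_pos hyi hyc) ht hgrowth
  have hupper : spectralRadius ℂ (W.map Complex.ofRealHom) ≤ ENNReal.ofReal (specRad W) :=
    iSup₂_le fun z hz => by
      simpa [enorm] using ENNReal.ofReal_le_ofReal (norm_le_specRad hz)
  exact (ENNReal.ofReal_le_ofReal_iff (specRad_nonneg W)).mp (hlower.trans hupper)

lemma le_specRad_fromBlocks_of_sq_smul_le {P R : Matrix m m ℝ} (hP : ∀ i j, 0 ≤ P i j)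
    (hR : ∀ i j, 0 ≤ R i j) {y : m → ℝ} (hy : 0 ≤ y) (hy0 : y ≠ 0) {s : ℝ} (hs : 0 ≤ s)
    (h : s ^ 2 • y ≤ (R * P) *ᵥ y) : s ≤ specRad (fromBlocks 0 P R 0) := by
  rcases hs.eq_or_lt with rfl | hs
  · exact specRad_nonneg _
  have hW : ∀ i j, 0 ≤ fromBlocks 0 P R 0 i j := by
    rintro (i | i) (j | j) <;> simp [hP, hR]
  set u : m ⊕ m → ℝ := Sum.elim (P *ᵥ y) (s • y)
  have hu : 0 ≤ u := by
    rintro (i | i)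
    · simpa [u] using mulVec_mono_of_nonneg hP hy i
    · exact smul_nonneg hs.le hy i
  have hu0 : u ≠ 0 := fun h0 => hy0 <| by
    simpa [u, hs.ne'] using congrArg (fun v => v ∘ Sum.inr) h0
  refine le_specRad_of_smul_le_mulVec hW hu hu0 hs.le ?_
  rw [fromBlocks_mulVec]
  rintro (i | i)
  · simp [u, mulVec_smul]
  · simpa [u, mulVec_mulVec, sq, mul_assoc] using h i

lemma specRad_cabs_mul_le_sq (B C : Matrix m m ℂ) :
    specRad (cabs (C * B)) ≤ specRad (cabs (fromBlocks 0 B C 0)) ^ 2 := by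
  refine specRad_le (sq_nonneg _) fun z hz => ?_
  obtain ⟨x, hx0, hx⟩ := exists_mulVec_eq_smul_of_mem_spectrum hz
  have hy0 : (‖x ·‖) ≠ 0 := fun h0 => hx0 <| funext fun i => norm_eq_zero.mp (congrFun h0 i)
  have hsub : ‖z‖ • (‖x ·‖) ≤ (cabs C * cabs B) *ᵥ (‖x ·‖) := by
    refine (norm_smul_le_cabs_mulVec hx).trans fun i => ?_
    rw [cabs_map_ofReal_cabs]
    exact Finset.sum_le_sum fun j _ =>
      mul_le_mul_of_nonneg_right (cabs_mul_le C B i j) (norm_nonneg _)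
  have hroot : Real.sqrt ‖z‖ ≤ specRad (cabs (fromBlocks 0 B C 0)) := by
    rw [cabs_fromBlocks]
    refine le_specRad_fromBlocks_of_sq_smul_le (fun _ _ => norm_nonneg _)
      (fun _ _ => norm_nonneg _) (fun i => norm_nonneg (x i)) hy0 (Real.sqrt_nonneg ‖z‖) ?_
    rwa [Real.sq_sqrt (norm_nonneg z)]
  calc ‖z‖ = Real.sqrt ‖z‖ ^ 2 := (Real.sq_sqrt (norm_nonneg z)).symm
    _ ≤ _ := pow_le_pow_left₀ (Real.sqrt_nonneg _) hroot 2

end Matrix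

theorem stmt4 {n : ℕ} (A M F : Matrix (Fin n) (Fin n) ℂ)
    (hM : IsUnit M) (hF : IsUnit F)
    (hQ : specRad (cabs (Matrix.fromBlocks 0 (1 - M⁻¹ * A) (1 - F⁻¹ * A) 0)) < 1) :
    specRad (cabs (1 - F⁻¹ * (M + F - A) * (M⁻¹ * A))) < 1 := by
  rw [one_sub_mul_eq_mul_one_sub_of_mul_eq_one
    (M.mul_nonsing_inv ((isUnit_iff_isUnit_det M).mp hM))
    (F.nonsing_inv_mul ((isUnit_iff_isUnit_det F).mp hF))]
  calc _ ≤ _ := Matrix.specRad_cabs_mul_le_sq _ _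
    _ < 1 := pow_lt_one₀ (Matrix.specRad_nonneg _) hQ two_ne_zero
end
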